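/- For every μ ∈ H, the point x* = -Σ_i (ν_i/λ_i)·⟨μ, φ_i⟩·φ_i is the unique minimizer over H of the function x ↦ f(x) + ⟨A(μ), x⟩, and the minimum value equals -Σ_i (ν_i²/(2λ_i))·⟨μ, φ_i⟩². Consequently, the dual function d(μ) := sup_{x ∈ H} (⟨-A(μ), x⟩ - f(x)) satisfies d(μ) = Σ_i (ν_i²/(2λ_i))·⟨μ, φ_i⟩². -/

import Mathlib

/-!
Everything diagonalises in the basis `φ`. Since `λ i * ⟪x⋆, φ i⟫ = -⟪A μ, φ i⟫`, completing the
square coordinatewise gives `f x + ⟪A μ, x⟫ = f (x - x⋆) - f x⋆`, and `f y ≥ (σ / 2) ‖y‖²`.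
So `x⋆` is the unique minimiser, with value `-f x⋆`, and the dual function equals `f x⋆`.
-/

open RealInnerProductSpace

namespace HilbertBasis

variable {H : Type*} [NormedAddCommGroup H] [InnerProductSpace ℝ H]
  {ι : Type*} (φ : HilbertBasis ι ℝ H)

theorem hasSum_inner_sq (x : H) : HasSum (fun i => ⟪x, φ i⟫ ^ 2) (‖x‖ ^ 2) := by
  simpa only [real_inner_comm x, ← sq, real_inner_self_eq_norm_sq] using
    φ.hasSum_inner_mul_inner x x

theorem summable_mul_inner_sq {c : ι → ℝ} {C : ℝ} (hc : ∀ i, |c i| ≤ C) (x : H) :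
    Summable fun i => c i * ⟪x, φ i⟫ ^ 2 :=
  ((φ.hasSum_inner_sq x).summable.mul_left C).of_norm_bounded fun i => by
    rw [Real.norm_eq_abs, abs_mul, abs_sq]
    exact mul_le_mul_of_nonneg_right (hc i) (sq_nonneg _)

theorem hasSum_real_inner_mul_inner (a x : H) :
    HasSum (fun i => ⟪a, φ i⟫ * ⟪x, φ i⟫) ⟪a, x⟫ := by
  simpa only [real_inner_comm x] using φ.hasSum_inner_mul_inner a x

theorem inner_tsum_smul {t : ι → ℝ} (ht : Summable fun i => t i ^ 2) (j : ι) :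
    ⟪∑' i, t i • φ i, φ j⟫ = t j := by
  have ht' : Memℓp t 2 := memℓp_gen <| by simpa only [ENNReal.toReal_ofNat, Real.rpow_two,
    Real.norm_eq_abs, sq_abs] using ht
  rw [(φ.hasSum_repr_symm ⟨t, ht'⟩).tsum_eq, real_inner_comm, ← φ.repr_apply_apply,
    LinearIsometryEquiv.apply_symm_apply]

theorem inner_tsum_mul_inner_smul {c : ι → ℝ} {C : ℝ} (hc : ∀ i, |c i| ≤ C) (x : H) (j : ι) :
    ⟪∑' i, c i • ⟪x, φ i⟫ • φ i, φ j⟫ = c j * ⟪x, φ j⟫ := by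
  have hc2 : ∀ i, |c i ^ 2| ≤ C ^ 2 := fun i => by
    rw [abs_pow]
    exact pow_le_pow_left₀ (abs_nonneg _) (hc i) 2
  simp_rw [smul_smul]
  exact φ.inner_tsum_smul (by simpa only [mul_pow] using φ.summable_mul_inner_sq hc2 x) j

variable {lam : ι → ℝ} {C : ℝ} {a xstar : H}

/-- The `tsum` is junk (`0`) when the series diverges, hence the hypotheses `|lam i| ≤ C` below. -/
noncomputable def diagonalQuadratic (lam : ι → ℝ) (x : H) : ℝ :=
  ∑' i, lam i / 2 * ⟪x, φ i⟫ ^ 2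

@[simp]
theorem diagonalQuadratic_zero : φ.diagonalQuadratic lam 0 = 0 := by
  simp [diagonalQuadratic]

theorem diagonalQuadratic_nonneg (hlam : ∀ i, 0 ≤ lam i) (x : H) :
    0 ≤ φ.diagonalQuadratic lam x :=
  tsum_nonneg fun i => mul_nonneg (div_nonneg (hlam i) zero_le_two) (sq_nonneg _)

theorem summable_half_mul_inner_sq (hC : ∀ i, |lam i| ≤ C) (x : H) :
    Summable fun i => lam i / 2 * ⟪x, φ i⟫ ^ 2 :=
  φ.summable_mul_inner_sq (C := C / 2) (fun i => by
    rw [abs_div, abs_two]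
    exact div_le_div_of_nonneg_right (hC i) zero_le_two) x

theorem half_mul_norm_sq_le_diagonalQuadratic {σ : ℝ} (hσ : ∀ i, σ ≤ lam i)
    (hC : ∀ i, |lam i| ≤ C) (x : H) : σ / 2 * ‖x‖ ^ 2 ≤ φ.diagonalQuadratic lam x := by
  rw [diagonalQuadratic, ← (φ.hasSum_inner_sq x).tsum_eq, ← tsum_mul_left]
  exact ((φ.hasSum_inner_sq x).summable.mul_left _).tsum_le_tsum
    (fun i => mul_le_mul_of_nonneg_right (by linarith [hσ i]) (sq_nonneg _))
    (φ.summable_half_mul_inner_sq hC x)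

/-- Completing the square: `hcrit` says that `xstar` is the critical point of the left side. -/
theorem diagonalQuadratic_add_inner (hC : ∀ i, |lam i| ≤ C)
    (hcrit : ∀ i, lam i * ⟪xstar, φ i⟫ = -⟪a, φ i⟫) (x : H) :
    φ.diagonalQuadratic lam x + ⟪a, x⟫ =
      φ.diagonalQuadratic lam (x - xstar) - φ.diagonalQuadratic lam xstar := by
  refine (((φ.summable_half_mul_inner_sq hC x).hasSum).add
    (φ.hasSum_real_inner_mul_inner a x)).unique <|
    (((φ.summable_half_mul_inner_sq hC (x - xstar)).hasSum).sub
    (φ.summable_half_mul_inner_sq hC xstar).hasSum).congr_fun fun i => ?_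
  rw [inner_sub_left, ← neg_neg ⟪a, φ i⟫, ← hcrit i]
  ring

theorem diagonalQuadratic_add_inner_self (hC : ∀ i, |lam i| ≤ C)
    (hcrit : ∀ i, lam i * ⟪xstar, φ i⟫ = -⟪a, φ i⟫) :
    φ.diagonalQuadratic lam xstar + ⟪a, xstar⟫ = -φ.diagonalQuadratic lam xstar := by
  rw [φ.diagonalQuadratic_add_inner hC hcrit, sub_self, diagonalQuadratic_zero, zero_sub]

theorem diagonalQuadratic_add_inner_le (hlam : ∀ i, 0 ≤ lam i) (hC : ∀ i, |lam i| ≤ C)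
    (hcrit : ∀ i, lam i * ⟪xstar, φ i⟫ = -⟪a, φ i⟫) (x : H) :
    φ.diagonalQuadratic lam xstar + ⟪a, xstar⟫ ≤ φ.diagonalQuadratic lam x + ⟪a, x⟫ := by
  rw [φ.diagonalQuadratic_add_inner_self hC hcrit, φ.diagonalQuadratic_add_inner hC hcrit]
  linarith [φ.diagonalQuadratic_nonneg hlam (x - xstar)]

theorem eq_of_diagonalQuadratic_add_inner_le {σ : ℝ} (hσ : 0 < σ) (hσlam : ∀ i, σ ≤ lam i)
    (hC : ∀ i, |lam i| ≤ C) (hcrit : ∀ i, lam i * ⟪xstar, φ i⟫ = -⟪a, φ i⟫) {x : H}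
    (hx : φ.diagonalQuadratic lam x + ⟪a, x⟫ ≤ φ.diagonalQuadratic lam xstar + ⟪a, xstar⟫) :
    x = xstar := by
  rw [φ.diagonalQuadratic_add_inner_self hC hcrit, φ.diagonalQuadratic_add_inner hC hcrit] at hx
  have hnorm_sq : ‖x - xstar‖ ^ 2 ≤ 0 := by
    nlinarith [φ.half_mul_norm_sq_le_diagonalQuadratic hσlam hC (x - xstar)]
  rw [← sub_eq_zero, ← norm_eq_zero, ← sq_eq_zero_iff]
  exact le_antisymm hnorm_sq (sq_nonneg _)

theorem iSup_inner_neg_sub_diagonalQuadratic (hlam : ∀ i, 0 ≤ lam i) (hC : ∀ i, |lam i| ≤ C)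
    (hcrit : ∀ i, lam i * ⟪xstar, φ i⟫ = -⟪a, φ i⟫) :
    ⨆ x, (⟪-a, x⟫ - φ.diagonalQuadratic lam x) = φ.diagonalQuadratic lam xstar := by
  have hmin := φ.diagonalQuadratic_add_inner_le hlam hC hcrit
  have hval := φ.diagonalQuadratic_add_inner_self hC hcrit
  refine ciSup_eq_of_forall_le_of_forall_lt_exists_gt (fun x => ?_)
    fun w hw => ⟨xstar, hw.trans_eq ?_⟩
  · linarith [inner_neg_left (𝕜 := ℝ) a x, hmin x]
  · linarith [inner_neg_left (𝕜 := ℝ) a xstar]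

end HilbertBasis

theorem dual_function_formula_general {H : Type*} [NormedAddCommGroup H] [InnerProductSpace ℝ H]
    {ι : Type*} (φ : HilbertBasis ι ℝ H)
    (σ β θ ζ : ℝ) (hσ : 0 < σ)
    (lam ν : ι → ℝ) (hlam : ∀ i, σ ≤ lam i ∧ lam i ≤ β) (hν : ∀ i, θ ≤ ν i ∧ ν i ≤ ζ)
    (f : H → ℝ) (hf : ∀ x, f x = ∑' i, lam i / 2 * ⟪x, φ i⟫ ^ 2)
    (A : H → H) (hA : ∀ x, A x = ∑' i, ν i • (⟪x, φ i⟫ : ℝ) • φ i)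
    (μ : H) (xstar : H)
    (hxstar : xstar = -∑' i, (ν i / lam i) • (⟪μ, φ i⟫ : ℝ) • φ i) :
    (∀ x : H, f xstar + ⟪A μ, xstar⟫ ≤ f x + ⟪A μ, x⟫) ∧
    (∀ q : H, (∀ x : H, f q + ⟪A μ, q⟫ ≤ f x + ⟪A μ, x⟫) → q = xstar) ∧
    f xstar + ⟪A μ, xstar⟫ = -∑' i, ν i ^ 2 / (2 * lam i) * ⟪μ, φ i⟫ ^ 2 ∧
    (⨆ x : H, (⟪-A μ, x⟫ - f x)) = ∑' i, ν i ^ 2 / (2 * lam i) * ⟪μ, φ i⟫ ^ 2 := by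
  have hlam_pos : ∀ i, 0 < lam i := fun i => hσ.trans_le (hlam i).1
  have hlam_abs : ∀ i, |lam i| ≤ max |σ| |β| := fun i => abs_le_max_abs_abs (hlam i).1 (hlam i).2
  have hν_abs : ∀ i, |ν i| ≤ max |θ| |ζ| := fun i => abs_le_max_abs_abs (hν i).1 (hν i).2
  have hνlam_abs : ∀ i, |ν i / lam i| ≤ max |θ| |ζ| / σ := fun i => by
    rw [abs_div, abs_of_pos (hlam_pos i)]
    exact div_le_div₀ ((abs_nonneg _).trans (hν_abs i)) (hν_abs i) hσ (hlam i).1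
  have hxstar_coord : ∀ i, ⟪xstar, φ i⟫ = -(ν i / lam i * ⟪μ, φ i⟫) := fun i => by
    rw [hxstar, inner_neg_left, φ.inner_tsum_mul_inner_smul hνlam_abs]
  have hcrit : ∀ i, lam i * ⟪xstar, φ i⟫ = -⟪A μ, φ i⟫ := fun i => by
    rw [hxstar_coord, hA, φ.inner_tsum_mul_inner_smul hν_abs]
    field_simp [(hlam_pos i).ne']
  obtain rfl : f = φ.diagonalQuadratic lam := funext hf
  have hval : φ.diagonalQuadratic lam xstar = ∑' i, ν i ^ 2 / (2 * lam i) * ⟪μ, φ i⟫ ^ 2 :=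
    tsum_congr fun i => by
      rw [hxstar_coord]
      field_simp [(hlam_pos i).ne']
  have hlam_nonneg : ∀ i, 0 ≤ lam i := fun i => (hlam_pos i).le
  refine ⟨φ.diagonalQuadratic_add_inner_le hlam_nonneg hlam_abs hcrit,
    fun q hq => φ.eq_of_diagonalQuadratic_add_inner_le hσ (fun i => (hlam i).1) hlam_abs hcrit
      (hq xstar), ?_, ?_⟩
  · rw [φ.diagonalQuadratic_add_inner_self hlam_abs hcrit, hval]
  · rw [φ.iSup_inner_neg_sub_diagonalQuadratic hlam_nonneg hlam_abs hcrit, hval]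

/-- For `f(x) = Σ_i (λ i / 2) ⟪x, φ i⟫²` and `A μ = Σ_i ν i • ⟪μ, φ i⟫ • φ i`:
the point `x* = -Σ_i (ν i / λ i) • ⟪μ, φ i⟫ • φ i` is the unique minimizer of
`x ↦ f x + ⟪A μ, x⟫`, the minimum value equals `-Σ_i (ν i² / (2 λ i)) ⟪μ, φ i⟫²`, and
consequently the dual function `d(μ) = ⨆_x (⟪-A μ, x⟫ - f x)` satisfies
`d(μ) = Σ_i (ν i² / (2 λ i)) ⟪μ, φ i⟫²`. -/
theorem dual_function_formula {H : Type*} [NormedAddCommGroup H] [InnerProductSpace ℝ H]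
    [CompleteSpace H] {ι : Type*} (φ : HilbertBasis ι ℝ H)
    (σ β θ ζ : ℝ) (hσ : 0 < σ) (hσβ : σ ≤ β) (hθ : 0 < θ) (hθζ : θ ≤ ζ)
    (lam ν : ι → ℝ) (hlam : ∀ i, σ ≤ lam i ∧ lam i ≤ β) (hν : ∀ i, θ ≤ ν i ∧ ν i ≤ ζ)
    (f : H → ℝ) (hf : ∀ x, f x = ∑' i, lam i / 2 * ⟪x, φ i⟫ ^ 2)
    (A : H → H) (hA : ∀ x, A x = ∑' i, ν i • (⟪x, φ i⟫ : ℝ) • φ i)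
    (μ : H) (xstar : H)
    (hxstar : xstar = -∑' i, (ν i / lam i) • (⟪μ, φ i⟫ : ℝ) • φ i) :
    (∀ x : H, f xstar + ⟪A μ, xstar⟫ ≤ f x + ⟪A μ, x⟫) ∧
    (∀ q : H, (∀ x : H, f q + ⟪A μ, q⟫ ≤ f x + ⟪A μ, x⟫) → q = xstar) ∧
    f xstar + ⟪A μ, xstar⟫ = -∑' i, ν i ^ 2 / (2 * lam i) * ⟪μ, φ i⟫ ^ 2 ∧
    (⨆ x : H, (⟪-A μ, x⟫ - f x)) = ∑' i, ν i ^ 2 / (2 * lam i) * ⟪μ, φ i⟫ ^ 2 :=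
  dual_function_formula_general φ σ β θ ζ hσ lam ν hlam hν f hf A hA μ xstar hxstar
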